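/- arXiv:1109.0239 — 10 statements merged into one kernel-verified Lean document; each statement's English description precedes it below -/
import Mathlib

section
/- Let A be a real algebra with left unit e such that x²e = x² for all x ∈ A. Then (xe)e = x for all x ∈ A. -/
theorem stmt_0 {A : Type*} [NonUnitalNonAssocRing A] [Module ℝ A]
    [SMulCommClass ℝ A A] [IsScalarTower ℝ A A]
    (e : A) (hleft : ∀ x : A, e * x = x)
    (hsq : ∀ x : A, (x * x) * e = x * x) :
    ∀ x : A, (x * e) * e = x := by
  intro x
  have h := hsq (x + e)
  simp only [mul_add, add_mul, hleft, hsq] at h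
  -- h : x*x + (x*e)*e + (x*e + e) = x*x + x*e + (x + e)
  linear_combination (norm := abel) h
end

section
/- Let A be a real algebra of characteristic zero satisfying the identity (x², x², x²) = 0 (where (x,y,z) = (xy)z − x(yz) is the associator), and suppose A contains a left unit e that is not a zero divisor (i.e., right multiplication by e is injective). Then (xe)e = x for all x ∈ A. -/
theorem stmt_1 {A : Type*} [NonUnitalNonAssocRing A] [Module ℝ A]
    [SMulCommClass ℝ A A] [IsScalarTower ℝ A A]
    (e : A) (hleft : ∀ x : A, e * x = x)
    (hne : ∀ y : A, y * e = 0 → y = 0)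
    (hassoc : ∀ x : A, ((x * x) * (x * x)) * (x * x) = (x * x) * ((x * x) * (x * x))) :
    ∀ x : A, (x * e) * e = x := by
  have key : ∀ y : A, ((y + y * e) * e) * e = (y + y * e) * e := by
    intro y
    set G : ℝ → A := fun t =>
      (((e + t • y) * (e + t • y)) * ((e + t • y) * (e + t • y))) * ((e + t • y) * (e + t • y))
      - ((e + t • y) * (e + t • y)) * (((e + t • y) * (e + t • y)) * ((e + t • y) * (e + t • y)))
      with hG
    have hg : ∀ t : ℝ, G t = 0 := fun t => sub_eq_zero.mpr (hassoc (e + t • y))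
    have comb : (60 : ℝ) • (((y + y * e) * e) * e - (y + y * e) * e)
        = (45 : ℝ) • (G 1 - G (-1)) - (9 : ℝ) • (G 2 - G (-2)) + (G 3 - G (-3)) := by
      simp only [hG, mul_add, add_mul, smul_mul_assoc, mul_smul_comm, smul_smul, smul_add,
        smul_sub, hleft]
      module
    rw [hg, hg, hg, hg, hg, hg] at comb
    simp only [sub_zero, smul_zero, sub_self, add_zero] at comb
    have hz : ((y + y * e) * e) * e - (y + y * e) * e = 0 := by
      have : ((y + y * e) * e) * e - (y + y * e) * e
          = ((60 : ℝ)⁻¹ * 60) • (((y + y * e) * e) * e - (y + y * e) * e) := by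
        norm_num
      rw [this, ← smul_smul, comb, smul_zero]
    exact sub_eq_zero.mp hz
  intro x
  have hx := key x
  have expand : (x * e) * e + ((x * e) * e) * e = x * e + (x * e) * e := by
    have h1 : (x + x * e) * e = x * e + (x * e) * e := by rw [add_mul]
    calc (x * e) * e + ((x * e) * e) * e = ((x + x * e) * e) * e := by rw [h1, add_mul]
      _ = (x + x * e) * e := hx
      _ = x * e + (x * e) * e := h1
  have h2 : ((x * e) * e) * e = x * e := by
    have h := expand
    rw [add_comm (x * e) ((x * e) * e)] at h
    exact add_left_cancel h
  have h3 : ((x * e) * e - x) * e = 0 := by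
    rw [sub_mul, h2, sub_self]
  exact sub_eq_zero.mp (hne _ h3)
end

section
/- For norm-one quaternions a, b, the map T_{a,b} ∘ σ (where T_{a,b}(x) = axb and σ is quaternion conjugation) is an involution (i.e., (T_{a,b}∘σ)² = id) if and only if b = a or b = −a. -/
/-!
Since conjugation reverses products, `(T_{a,b} ∘ σ)² x = (a b̄) x (ā b)`. If this is the identity,
then `c = a b̄` is central in `ℍ`, hence real, and it has norm one; so `c = ±1` and `b = c̄ a = ±a`.
-/

open Quaternion

theorem commute_of_forall_mul_mul_eq {M : Type*} [Monoid M] {u v : M}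
    (h : ∀ x, u * x * v = x) (x : M) : Commute u x := by
  have huv : u * v = 1 := by simpa using h 1
  have hvu : v * u = 1 := by
    calc v * u = u * (v * u) * v := (h _).symm
      _ = (u * v) * (u * v) := by simp only [mul_assoc]
      _ = 1 := by rw [huv, one_mul]
  calc u * x = u * x * v * u := by rw [mul_assoc (u * x), hvu, mul_one]
    _ = x * u := by rw [h]

theorem mul_star_mul_star_mul_mul {M : Type*} [Monoid M] [StarMul M] (a b x : M) :
    a * star (a * star x * b) * b = a * star b * x * (star a * b) := by
  simp only [star_mul, star_star, mul_assoc]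

namespace Quaternion

theorem eq_re_of_forall_commute {R : Type*} [CommRing R] [NoZeroDivisors R] [CharZero R]
    {c : ℍ[R]} (h : ∀ x, Commute c x) : c = c.re := by
  have hJ (x : ℍ[R]) : (c * x).imJ = (x * c).imJ := by rw [(h x).eq]
  have hK (x : ℍ[R]) : (c * x).imK = (x * c).imK := by rw [(h x).eq]
  simp only [imJ_mul, imK_mul] at hJ hK
  have hi : c.imI = 0 := self_eq_neg.mp <| by simpa using hK ⟨0, 0, 1, 0⟩
  have hj : c.imJ = 0 := self_eq_neg.mp <| by simpa using (hK ⟨0, 1, 0, 0⟩).symm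
  have hk : c.imK = 0 := self_eq_neg.mp <| by simpa using hJ ⟨0, 1, 0, 0⟩
  ext <;> simp [hi, hj, hk]

theorem mem_unitary_of_norm_eq_one {q : ℍ} (hq : ‖q‖ = 1) : q ∈ unitary ℍ := by
  rw [Unitary.mem_iff, star_mul_self, self_mul_star, normSq_eq_norm_mul_self, hq, mul_one,
    coe_one]
  exact ⟨rfl, rfl⟩

end Quaternion

theorem stmt_3 (a b : Quaternion ℝ) (ha : ‖a‖ = 1) (hb : ‖b‖ = 1) :
    (∀ x : Quaternion ℝ, a * star (a * star x * b) * b = x) ↔ (b = a ∨ b = -a) := by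
  have ha_unit := mem_unitary_of_norm_eq_one ha
  constructor
  · intro h
    set c := a * star b with hc_def
    have hc : c = c.re := eq_re_of_forall_commute <| commute_of_forall_mul_mul_eq
      (v := star a * b) fun x => by rw [← mul_star_mul_star_mul_mul, h]
    have hb_eq : b = c.re * a := by
      rw [← star_coe, ← hc, hc_def, star_mul, star_star, mul_assoc,
        Unitary.star_mul_self_of_mem ha_unit, mul_one]
    have hre : ‖c.re‖ = 1 := by
      rw [← norm_coe, ← hc, hc_def, norm_mul, norm_star, ha, hb, mul_one]
    rcases abs_eq zero_le_one |>.mp hre with h1 | h1 <;> simp [hb_eq, h1]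
  · rintro (rfl | rfl) x <;> rw [mul_star_mul_star_mul_mul] <;>
      simp [Unitary.mul_star_self_of_mem ha_unit, Unitary.star_mul_self_of_mem ha_unit]
end

section
/- For norm-one quaternions a, b, the map T_{a,b} : ℍ → ℍ, x ↦ axb, is an involution distinct from ±id if and only if a² = b² = −1 (equivalently, a and b are purely imaginary unit quaternions). -/
/-!
Since `a (a x b) b = a² x b²`, the map `T_{a,b}` is an involution exactly when `a² b² = 1` and
`a²` is central. Central quaternions are real, and `‖a‖ = 1` leaves `a² = ±1`. If `a² = 1` then
`a, b ∈ {±1}` and `T_{a,b} = ±id`; so `a² = b² = -1`. Conversely, if `T_{a,b} = ±id` then `±a`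
is central, hence real, and cannot square to `-1`.
-/

theorem forall_mul_mul_eq_self_iff {M : Type*} [Monoid M] [IsDedekindFiniteMonoid M] {c d : M} :
    (∀ x, c * x * d = x) ↔ c * d = 1 ∧ ∀ x, c * x = x * c := by
  constructor
  · intro h
    have hcd : c * d = 1 := by simpa using h 1
    refine ⟨hcd, fun x => ?_⟩
    calc c * x = c * x * (d * c) := by rw [mul_eq_one_comm.1 hcd, mul_one]
      _ = x * c := by rw [← mul_assoc, h]
  · rintro ⟨hcd, hc⟩ x
    rw [hc, mul_assoc, hcd, mul_one]

theorem forall_mul_mul_eq_self_or_neg_of_sq_eq_one {R : Type*} [Ring R] [NoZeroDivisors R]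
    {a b : R} (ha : a ^ 2 = 1) (hb : b ^ 2 = 1) :
    (∀ x, a * x * b = x) ∨ ∀ x, a * x * b = -x := by
  rcases sq_eq_one_iff.1 ha with rfl | rfl <;> rcases sq_eq_one_iff.1 hb with rfl | rfl <;> simp

namespace Quaternion

section CommRing

variable {R : Type*} [CommRing R] [IsAddTorsionFree R] {a : ℍ[R]}

theorem eq_coe_re_of_forall_mul_comm (h : ∀ x : ℍ[R], a * x = x * a) : a = a.re := by
  obtain ⟨i, hi⟩ : ∃ i : ℍ[R], i.re = 0 ∧ i.imI = 1 ∧ i.imJ = 0 ∧ i.imK = 0 :=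
    ⟨⟨0, 1, 0, 0⟩, rfl, rfl, rfl, rfl⟩
  obtain ⟨j, hj⟩ : ∃ j : ℍ[R], j.re = 0 ∧ j.imI = 0 ∧ j.imJ = 1 ∧ j.imK = 0 :=
    ⟨⟨0, 0, 1, 0⟩, rfl, rfl, rfl, rfl⟩
  have hai := Quaternion.ext_iff.1 (h i)
  have haj := Quaternion.ext_iff.1 (h j)
  simp only [re_mul, imI_mul, imJ_mul, imK_mul, hi, hj, mul_zero, zero_mul, mul_one, one_mul,
    sub_zero, add_zero, zero_sub, zero_add] at hai haj
  ext
  · rfl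
  · exact self_eq_neg.1 haj.2.2.2
  · exact neg_eq_self.1 hai.2.2.2
  · exact self_eq_neg.1 hai.2.2.1

theorem sq_eq_one_or_sq_eq_neg_one [NoZeroDivisors R] (ha : normSq a = 1)
    (h : ∀ x : ℍ[R], a ^ 2 * x = x * a ^ 2) : a ^ 2 = 1 ∨ a ^ 2 = -1 := by
  have hre := eq_coe_re_of_forall_mul_comm h
  have hre_sq : (a ^ 2).re ^ 2 = 1 := by rw [← normSq_coe, ← hre, map_pow, ha, one_pow]
  rcases sq_eq_one_iff.1 hre_sq with h1 | h1 <;> rw [hre, h1] <;> simp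

end CommRing

theorem not_forall_mul_comm_of_sq_eq_neg_one {R : Type*} [Field R] [LinearOrder R]
    [IsStrictOrderedRing R] {a : ℍ[R]} (ha : a ^ 2 = -1) : ¬ ∀ x : ℍ[R], a * x = x * a := by
  intro h
  rw [eq_coe_re_of_forall_mul_comm h, ← coe_pow, ← coe_one, ← coe_neg, coe_inj] at ha
  nlinarith

end Quaternion

theorem stmt_4_general (a b : Quaternion ℝ) (ha : ‖a‖ = 1) :
    ((∀ x : Quaternion ℝ, a * (a * x * b) * b = x) ∧
      ¬ (∀ x : Quaternion ℝ, a * x * b = x) ∧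
      ¬ (∀ x : Quaternion ℝ, a * x * b = -x)) ↔ (a ^ 2 = -1 ∧ b ^ 2 = -1) := by
  have hT : ∀ x, a * (a * x * b) * b = a ^ 2 * x * b ^ 2 := fun x => by noncomm_ring
  constructor
  · rintro ⟨hinv, hne_id, hne_neg⟩
    obtain ⟨hab, hcentral⟩ := forall_mul_mul_eq_self_iff.1 fun x => (hT x).symm.trans (hinv x)
    have hnorm : Quaternion.normSq a = 1 := by rw [Quaternion.normSq_eq_norm_mul_self, ha, one_mul]
    rcases Quaternion.sq_eq_one_or_sq_eq_neg_one hnorm hcentral with ha2 | ha2 <;>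
      rw [ha2] at hab ⊢
    · rw [one_mul] at hab
      rcases forall_mul_mul_eq_self_or_neg_of_sq_eq_one ha2 hab with h | h
      exacts [absurd h hne_id, absurd h hne_neg]
    · exact ⟨rfl, by rwa [neg_one_mul, neg_eq_iff_eq_neg] at hab⟩
  · rintro ⟨ha2, hb2⟩
    refine ⟨fun x => by rw [hT, ha2, hb2]; noncomm_ring, fun h => ?_, fun h => ?_⟩
    · exact Quaternion.not_forall_mul_comm_of_sq_eq_neg_one ha2 (forall_mul_mul_eq_self_iff.1 h).2
    · refine Quaternion.not_forall_mul_comm_of_sq_eq_neg_one (a := -a) (by rwa [neg_sq])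
        (forall_mul_mul_eq_self_iff (d := b).1 fun x => ?_).2
      rw [neg_mul, neg_mul, h, neg_neg]

theorem stmt_4 (a b : Quaternion ℝ) (ha : ‖a‖ = 1) (hb : ‖b‖ = 1) :
    ((∀ x : Quaternion ℝ, a * (a * x * b) * b = x) ∧
      ¬ (∀ x : Quaternion ℝ, a * x * b = x) ∧
      ¬ (∀ x : Quaternion ℝ, a * x * b = -x)) ↔ (a ^ 2 = -1 ∧ b ^ 2 = -1) :=
  stmt_4_general a b ha
end

section
/- Let a be a norm-one quaternion. The map φ = T_{a,ā} ∘ σ (i.e., φ(x) = a·x̄·ā where σ is conjugation) satisfies φ(φ(x)·x) = φ(x)·x for all quaternions x if and only if a² = 1 or a² = −1. -/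
/-! With `φ x = a * x̄ * ā`, one has `φ (φ x * x) = a x̄ a x ā²` while `φ x * x = a x̄ ā x`.
Cancelling `a x̄` and using `ā a = 1`, the identity at `x ≠ 0` says exactly that `x` commutes
with `ā² = (a²)⁻¹`. So the condition means that `a²` is central in `ℍ`, i.e. real, and a real
quaternion of norm one is `±1`. -/

section DivisionRing

variable {D : Type*} [DivisionRing D] [StarRing D] {a : D}

theorem conj_star_fixed_iff_commute (ha : star a * a = 1) {x : D} (hx : x ≠ 0) :
    a * star (a * star x * star a * x) * star a = a * star x * star a * x ↔
      Commute x (star a ^ 2) := by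
  have ha' : a * star a = 1 := mul_eq_one_comm.mp ha
  have ha0 : a ≠ 0 := left_ne_zero_of_mul_eq_one ha'
  have hsa0 : star a ≠ 0 := left_ne_zero_of_mul_eq_one ha
  have hax : a * star x ≠ 0 := mul_ne_zero ha0 (star_ne_zero.mpr hx)
  have hstar : star (a * star x * star a * x) = star x * a * x * star a := by
    simp only [star_mul, star_star, mul_assoc]
  rw [hstar, Commute, SemiconjBy, sq]
  calc a * (star x * a * x * star a) * star a = a * star x * star a * x
      ↔ a * star x * (a * x * star a * star a) = a * star x * (star a * x) := by
        simp only [mul_assoc]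
    _ ↔ a * x * star a * star a = star a * x := mul_right_inj' hax
    _ ↔ star a * (a * x * star a * star a) = star a * (star a * x) := (mul_right_inj' hsa0).symm
    _ ↔ x * (star a * star a) = star a * star a * x := by
        simp only [← mul_assoc, ha, one_mul]

theorem forall_conj_star_fixed_iff_commute (ha : star a * a = 1) :
    (∀ x : D, a * star (a * star x * star a * x) * star a = a * star x * star a * x) ↔
      ∀ x : D, Commute x (a ^ 2) := by
  have hinv : star a ^ 2 = (a ^ 2)⁻¹ := by rw [eq_inv_of_mul_eq_one_left ha, inv_pow]
  refine forall_congr' fun x => ?_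
  rcases eq_or_ne x 0 with rfl | hx
  · simp
  · rw [conj_star_fixed_iff_commute ha hx, hinv]
    exact ⟨fun h => inv_inv (a ^ 2) ▸ h.inv_right₀, Commute.inv_right₀⟩

end DivisionRing

namespace Quaternion

variable {R : Type*} [Field R] [LinearOrder R] [IsStrictOrderedRing R]

theorem eq_coe_re_of_forall_commute {q : ℍ[R]} (h : ∀ x : ℍ[R], Commute x q) :
    q = (q.re : ℍ[R]) := by
  obtain ⟨i, hi_def⟩ : ∃ i : ℍ[R], i = ⟨0, 1, 0, 0⟩ := ⟨_, rfl⟩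
  obtain ⟨j, hj_def⟩ : ∃ j : ℍ[R], j = ⟨0, 0, 1, 0⟩ := ⟨_, rfl⟩
  -- commuting with `i` kills the `j`, `k` parts of `q`, commuting with `j` its `i` part
  have hi := Quaternion.ext_iff.mp (h i).eq
  have hj := Quaternion.ext_iff.mp (h j).eq
  simp only [imJ_mul, imK_mul] at hi hj
  subst hi_def hj_def
  simp only [zero_mul, one_mul, zero_sub, add_zero, mul_zero, sub_self, mul_one, zero_add,
    sub_zero, true_and] at hi hj
  ext <;> simp <;> linarith

theorem coe_eq_one_or_neg_one_of_normSq {r : R} (h : normSq (r : ℍ[R]) = 1) :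
    (r : ℍ[R]) = 1 ∨ (r : ℍ[R]) = -1 := by
  rw [normSq_coe, sq_eq_one_iff] at h
  rcases h with rfl | rfl
  · exact Or.inl coe_one
  · exact Or.inr (by rw [coe_neg, coe_one])

end Quaternion

theorem stmt_5 (a : Quaternion ℝ) (ha : ‖a‖ = 1) :
    (∀ x : Quaternion ℝ,
        a * star ((a * star x * star a) * x) * star a = (a * star x * star a) * x) ↔
      (a ^ 2 = 1 ∨ a ^ 2 = -1) := by
  have hn : Quaternion.normSq a = 1 := by rw [Quaternion.normSq_eq_norm_mul_self, ha, one_mul]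
  have hunit : star a * a = 1 := by rw [Quaternion.star_mul_self, hn, Quaternion.coe_one]
  rw [forall_conj_star_fixed_iff_commute hunit]
  constructor
  · intro h
    have hre := Quaternion.eq_coe_re_of_forall_commute h
    rw [hre]
    apply Quaternion.coe_eq_one_or_neg_one_of_normSq
    rw [← hre, map_pow, hn, one_pow]
  · rintro (h | h) x <;> rw [h]
    exacts [Commute.one_right x, Commute.neg_one_right x]
end

section
/- Let a, b be norm-one quaternions. The identity T_{a,b}(T_{a,b}(y)·x̄ + y·x) = T_{a,b}(y)·x̄ + y·x holds for all quaternions x, y (where T_{a,b}(z) = azb) if and only if a = b = 1 or a = b = −1. -/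
/-!
Taking `x = 1` shows that `y ↦ a y b` is an involution, so `a²` is central, hence real, hence
`±1`, and `b² = a²`. If `a² = 1` then `a, b ∈ {±1}`, and the mixed signs `a = -b` make the map
`-id`, which would force every quaternion to be real. If `a² = -1`, taking `x = b` gives
`a y + y b = 0` for all `y`, so `b = -a` is central, hence real, contradicting `b² = -1`.
-/

open Quaternion

instance Quaternion.instIsAddTorsionFree {R : Type*} [Field R] [CharZero R] :
    IsAddTorsionFree ℍ[R] :=
  .of_module_rat _

theorem Quaternion.eq_coe_re_of_forall_commute_s6 {R : Type*} [CommRing R] [IsAddTorsionFree R]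
    {c : ℍ[R]} (h : ∀ y, Commute c y) : c = c.re := by
  have hcomp (x : ℍ[R]) := congrArg (fun q : ℍ[R] => (q.imJ, q.imK)) (h x).eq
  simp only [Quaternion.imJ_mul, Quaternion.imK_mul, Prod.mk.injEq] at hcomp
  obtain ⟨hk, hj⟩ : c.imK = 0 ∧ c.imJ = 0 := by
    simpa [self_eq_neg, neg_eq_self] using hcomp ⟨0, 1, 0, 0⟩
  have hi : c.imI = 0 := by simpa [self_eq_neg] using (hcomp ⟨0, 0, 1, 0⟩).2
  ext <;> simp [hi, hj, hk]

theorem Quaternion.eq_one_or_eq_neg_one_of_forall_commute {c : ℍ} (hc : ‖c‖ = 1)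
    (h : ∀ y, Commute c y) : c = 1 ∨ c = -1 := by
  rw [eq_coe_re_of_forall_commute_s6 h, norm_coe, Real.norm_eq_abs] at hc
  rw [eq_coe_re_of_forall_commute_s6 h]
  rcases abs_eq zero_le_one |>.mp hc with hre | hre <;> simp [hre]

theorem commute_of_forall_mul_mul_eq_self {M : Type*} [Monoid M] {u v : M}
    (h : ∀ y, u * y * v = y) (y : M) : Commute u y := by
  have huv : u * v = 1 := by simpa using h 1
  have hvu : v * u = 1 := by simpa [mul_assoc, huv] using (h (v * u)).symm
  calc u * y = u * y * v * u := by rw [mul_assoc _ v, hvu, mul_one]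
    _ = y * u := by rw [h]

/-- `T (T y * x̄ + y * x) = T y * x̄ + y * x` for all `x y`, where `T z = a * z * b`. -/
def SatisfiesTwistIdentity {R : Type*} [Mul R] [Add R] [Star R] (a b : R) : Prop :=
  ∀ x y : R, a * ((a * y * b) * star x + y * x) * b = (a * y * b) * star x + y * x

theorem SatisfiesTwistIdentity.mul_self_mul_mul_mul_self {R : Type*} [Ring R] [StarRing R]
    {a b : R} (h : SatisfiesTwistIdentity a b) (y : R) : a * a * y * (b * b) = y := by
  have h1 := h 1 y
  rw [star_one, mul_one, mul_one] at h1
  calc a * a * y * (b * b) = a * (a * y * b + y) * b - a * y * b := by noncomm_ring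
    _ = y := by rw [h1]; abel

theorem Quaternion.not_satisfiesTwistIdentity_of_forall_mul_mul_eq_neg {R : Type*} [Field R]
    [CharZero R] {a b : ℍ[R]} (hab : ∀ y, a * y * b = -y) : ¬ SatisfiesTwistIdentity a b := by
  intro h
  have hreal (x : ℍ[R]) : x = x.re := by
    have h1 := h x 1
    rw [hab, hab, neg_eq_self] at h1
    exact star_eq_self.mp (by simpa [neg_add_eq_zero] using h1)
  simpa using congrArg (·.imI) (hreal ⟨0, 1, 0, 0⟩)

theorem Quaternion.not_satisfiesTwistIdentity_of_mul_self_eq_neg_one {a b : ℍ} (ha : a * a = -1)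
    (hb : b * b = -1) (hb1 : ‖b‖ = 1) : ¬ SatisfiesTwistIdentity a b := by
  intro h
  have hbs : b * star b = 1 := by
    rw [self_mul_star, normSq_eq_norm_mul_self, hb1, mul_one, coe_one]
  have hsum (y : ℍ) : a * y + y * b = 0 := by
    have h1 := h b y
    rw [mul_assoc (a * y) b (star b), hbs, mul_one] at h1
    have h2 : a * (a * y + y * b) * b = -(a * y + y * b) := by
      calc a * (a * y + y * b) * b = (a * a) * y * b + a * y * (b * b) := by noncomm_ring
        _ = -(a * y + y * b) := by rw [ha, hb]; noncomm_ring
    exact neg_eq_self.mp (h2.symm.trans h1)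
  have hab : a = -b := eq_neg_of_add_eq_zero_left (by simpa using hsum 1)
  have hcomm (y : ℍ) : Commute b y := by
    have := hsum y
    rwa [hab, neg_mul, neg_add_eq_zero] at this
  have hre := congrArg (·.re) hb
  rw [eq_coe_re_of_forall_commute_s6 hcomm, ← coe_mul, re_coe, re_neg, re_one] at hre
  linarith [mul_self_nonneg b.re]

theorem stmt_6 (a b : Quaternion ℝ) (ha : ‖a‖ = 1) (hb : ‖b‖ = 1) :
    (∀ x y : Quaternion ℝ,
        a * ((a * y * b) * star x + y * x) * b = (a * y * b) * star x + y * x) ↔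
      ((a = 1 ∧ b = 1) ∨ (a = -1 ∧ b = -1)) := by
  refine ⟨fun h => ?_, ?_⟩
  · have hsq := SatisfiesTwistIdentity.mul_self_mul_mul_mul_self h
    have hab : a * a * (b * b) = 1 := by simpa using hsq 1
    rcases eq_one_or_eq_neg_one_of_forall_commute (by rw [norm_mul, ha, one_mul])
      (commute_of_forall_mul_mul_eq_self hsq) with haa | haa
    · have hbb : b * b = 1 := by simpa [haa] using hab
      rcases mul_self_eq_one_iff.mp haa with rfl | rfl <;>
        rcases mul_self_eq_one_iff.mp hbb with rfl | rfl
      · exact Or.inl ⟨rfl, rfl⟩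
      · exact absurd h (not_satisfiesTwistIdentity_of_forall_mul_mul_eq_neg (by simp))
      · exact absurd h (not_satisfiesTwistIdentity_of_forall_mul_mul_eq_neg (by simp))
      · exact Or.inr ⟨rfl, rfl⟩
    · have hbb : b * b = -1 := neg_eq_iff_eq_neg.mp (by simpa [haa] using hab)
      exact absurd h (not_satisfiesTwistIdentity_of_mul_self_eq_neg_one haa hbb hb)
  · rintro (⟨rfl, rfl⟩ | ⟨rfl, rfl⟩) <;> intro x y <;> noncomm_ring
end

section
/- Let b, c be norm-one purely imaginary quaternions satisfying b·y·(a·x̄·ā − c·x̄·c̄)·c = y·(a·x̄·ā − c·x̄·c̄) for all quaternions x, y, where a is a norm-one purely imaginary quaternion. Then c = a or c = −a. -/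
/-!
If `a x̄ ā = c x̄ c̄` for every `x`, then `c̄ a` commutes with everything, so it is a real number
of absolute value one and `a = ±c`. Otherwise some `q = a x̄ ā - c x̄ c̄` is nonzero, and the
identity `b y q c = y q` at `y = 1` gives `b q c = q`, whence `(b y - y b) q c = 0`: the purely
imaginary `b` would be central, hence zero.
-/

open Quaternion

theorem commute_of_forall_mul_mul_mul_eq {R : Type*} [Ring R] [NoZeroDivisors R] {b q c : R}
    (hqc : q * c ≠ 0) (h : ∀ y, b * y * q * c = y * q) (y : R) : Commute b y := by
  have hbqc : b * q * c = q := by simpa using h 1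
  refine mul_right_cancel₀ hqc ?_
  calc b * y * (q * c) = y * q := by rw [← mul_assoc, h]
    _ = y * (b * q * c) := by rw [hbqc]
    _ = y * b * (q * c) := by simp only [mul_assoc]

namespace Quaternion

variable {R : Type*} [CommRing R]

theorem eq_coe_re_of_forall_commute_s11 [NoZeroDivisors R] [CharZero R] {u : ℍ[R]}
    (hu : ∀ z, Commute u z) : u = u.re := by
  have comm_im (z : ℍ[R]) : (u * z).imI = (z * u).imI ∧ (u * z).imK = (z * u).imK := by
    rw [(hu z).eq]; exact ⟨rfl, rfl⟩
  simp only [imI_mul, imK_mul] at comm_im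
  have hi := comm_im ⟨0, 1, 0, 0⟩
  have hj := comm_im ⟨0, 0, 1, 0⟩
  simp only [mul_one, mul_zero, add_zero, sub_zero, zero_mul, one_mul, zero_add, zero_sub,
    CharZero.neg_eq_self_iff, true_and, CharZero.eq_neg_self_iff] at hi hj
  ext <;> simp [hi, hj]

theorem eq_or_eq_neg_of_forall_conj_eq [IsDomain R] [CharZero R] {a c : ℍ[R]}
    (ha : normSq a = 1) (hc : normSq c = 1)
    (h : ∀ z, a * z * star a = c * z * star c) : c = a ∨ c = -a := by
  have hca (z : ℍ[R]) : Commute (star c * a) z :=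
    calc star c * a * z = star c * (a * z * star a) * a := by
          simp only [mul_assoc, star_mul_self, ha, coe_one, mul_one]
      _ = star c * (c * z * star c) * a := by rw [h]
      _ = z * (star c * a) := by simp only [← mul_assoc, star_mul_self, hc, coe_one, one_mul]
  set r := (star c * a).re
  have hr : star c * a = r := eq_coe_re_of_forall_commute_s11 hca
  have hr_sq : r ^ 2 = 1 := by
    rw [← normSq_coe, ← hr, map_mul, normSq_star, ha, hc, one_mul]
  have hac : a = c * r := by
    rw [← hr, ← mul_assoc, self_mul_star, hc, coe_one, one_mul]
  rcases sq_eq_one_iff.mp hr_sq with hr1 | hr1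
  · left; rw [hac, hr1, coe_one, mul_one]
  · right; rw [hac, hr1, coe_neg, coe_one, mul_neg_one, neg_neg]

theorem normSq_eq_one_of_norm_eq_one {q : ℍ[ℝ]} (hq : ‖q‖ = 1) : normSq q = 1 := by
  rw [normSq_eq_norm_mul_self, hq, one_mul]

end Quaternion

theorem stmt_11_general (a b c : Quaternion ℝ)
    (hb : b.re = 0)
    (hna : ‖a‖ = 1) (hnb : ‖b‖ = 1) (hnc : ‖c‖ = 1)
    (h : ∀ x y : Quaternion ℝ,
        b * y * (a * star x * star a - c * star x * star c) * c =
          y * (a * star x * star a - c * star x * star c)) :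
    c = a ∨ c = -a := by
  by_cases hconj : ∀ x : ℍ[ℝ], a * star x * star a = c * star x * star c
  · refine eq_or_eq_neg_of_forall_conj_eq (normSq_eq_one_of_norm_eq_one hna)
      (normSq_eq_one_of_norm_eq_one hnc) fun z => ?_
    simpa using hconj (star z)
  · obtain ⟨x, hx⟩ := not_forall.mp hconj
    have hc0 : c ≠ 0 := norm_ne_zero_iff.mp (hnc ▸ one_ne_zero)
    have hb_central := commute_of_forall_mul_mul_mul_eq (mul_ne_zero (sub_ne_zero.mpr hx) hc0) (h x)
    have hb0 : b = 0 := by rw [eq_coe_re_of_forall_commute_s11 hb_central, hb, coe_zero]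
    simp [hb0] at hnb

theorem stmt_11 (a b c : Quaternion ℝ)
    (ha : a.re = 0) (hb : b.re = 0) (hc : c.re = 0)
    (hna : ‖a‖ = 1) (hnb : ‖b‖ = 1) (hnc : ‖c‖ = 1)
    (h : ∀ x y : Quaternion ℝ,
        b * y * (a * star x * star a - c * star x * star c) * c =
          y * (a * star x * star a - c * star x * star c)) :
    c = a ∨ c = -a :=
  stmt_11_general a b c hb hna hnb hnc h
end

section
/- Let a be a quaternion with a² = −1. Then the map Φ(x) = a·x·ā is an isomorphism between the two algebras on ℍ with products x ⊙ y = (x̄·a)·y and x ⊛ y = x̄·(a·y); i.e., a·((x̄·a)·y)·ā = conj(a·x·ā)·(a·(a·y·ā)) holds for all quaternions x, y. -/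
theorem stmt_13 (a : Quaternion ℝ) (ha : a ^ 2 = -1) :
    ∀ x y : Quaternion ℝ,
      a * ((star x * a) * y) * star a =
        star (a * x * star a) * (a * (a * y * star a)) := by
  have hn : Quaternion.normSq a = 1 := by
    have h2 : (Quaternion.normSq a) ^ 2 = 1 := by
      have := congrArg Quaternion.normSq ha
      simpa [map_pow, sq] using this
    have hnn : (0:ℝ) ≤ Quaternion.normSq a := Quaternion.normSq_nonneg
    nlinarith [sq_nonneg (Quaternion.normSq a - 1)]
  have h1 : star a * a = 1 := by
    have := Quaternion.star_mul_self a
    rw [this, hn]; norm_num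
  intro x y
  have : star (a * x * star a) = a * star x * star a := by
    simp [mul_assoc]
  rw [this]
  calc a * ((star x * a) * y) * star a
      = a * star x * (a * y) * star a := by noncomm_ring
    _ = a * star x * (star a * a) * (a * y) * star a := by rw [h1]; noncomm_ring
    _ = a * star x * star a * (a * (a * y * star a)) := by noncomm_ring
end

section
/- For every norm-one quaternion a, the map Φ : ℍ × ℍ → ℍ × ℍ, (x, y) ↦ (x, a·y), is an algebra automorphism of the Cayley–Dickson double of ℍ with product (x, y)•(x', y') = (x·x' − ȳ'·y, y·x̄' + y'·x). -/
/-!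
Replacing `y, y'` by `a y, a y'` leaves the first component of the Cayley–Dickson product
unchanged, since `star (a y') (a y) = star y' (star a a) y` and `star a a = ‖a‖² = 1`; and it
multiplies the second component by `a` on the left, since `y` and `y'` stand on the left in
both of its terms.
-/

/-- The Cayley–Dickson product on `ℍ × ℍ`. -/
noncomputable def cdMul (p q : Quaternion ℝ × Quaternion ℝ) : Quaternion ℝ × Quaternion ℝ :=
  (p.1 * q.1 - star q.2 * p.2, p.2 * star q.1 + q.2 * p.1)

namespace Quaternion

theorem star_mul_self_eq_one_of_norm_eq_one {a : ℍ[ℝ]} (ha : ‖a‖ = 1) : star a * a = 1 := by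
  rw [star_mul_self, normSq_eq_norm_mul_self, ha, mul_one, coe_one]

end Quaternion

theorem cdMul_mul_left_snd {a : Quaternion ℝ} (ha : star a * a = 1)
    (p q : Quaternion ℝ × Quaternion ℝ) :
    cdMul (p.1, a * p.2) (q.1, a * q.2) = ((cdMul p q).1, a * (cdMul p q).2) := by
  simp only [cdMul, star_mul, mul_add, Prod.mk.injEq]
  refine ⟨?_, by simp only [mul_assoc]⟩
  rw [mul_assoc, ← mul_assoc (star a), ha, one_mul]

theorem stmt_15 (a : Quaternion ℝ) (ha : ‖a‖ = 1) :
    let Φ : Quaternion ℝ × Quaternion ℝ → Quaternion ℝ × Quaternion ℝ :=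
      fun p => (p.1, a * p.2)
    Function.Bijective Φ ∧
      (∀ p q, Φ (p + q) = Φ p + Φ q) ∧
      (∀ (r : ℝ) (p), Φ (r • p) = r • Φ p) ∧
      (∀ p q, Φ (cdMul p q) = cdMul (Φ p) (Φ q)) := by
  have ha₀ : a ≠ 0 := norm_ne_zero_iff.mp (ha ▸ one_ne_zero)
  refine ⟨Function.bijective_id.prodMap (mulLeft_bijective₀ a ha₀), fun p q => ?_,
    fun r p => ?_, fun p q => ?_⟩
  · exact Prod.ext rfl (mul_add a p.2 q.2)
  · exact Prod.ext rfl (mul_smul_comm r a p.2)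
  · exact (cdMul_mul_left_snd (Quaternion.star_mul_self_eq_one_of_norm_eq_one ha) p q).symm
end

section
/- Let A be an absolute-valued algebra with left unit e whose norm comes from an inner product such that x*(xy) = ‖x‖²y where x* = 2⟨e|x⟩e − x, and assume (xe)e = x for all x. Then for all x ∈ A: ((xe)·x)·e = x·(xe). -/
open scoped RealInnerProductSpace

theorem stmt_17 {A : Type*} [NormedAddCommGroup A] [InnerProductSpace ℝ A]
    (mul : A →ₗ[ℝ] A →ₗ[ℝ] A) (e : A)
    (habs : ∀ x y : A, ‖mul x y‖ = ‖x‖ * ‖y‖)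
    (hleft : ∀ x : A, mul e x = x)
    (hstar : ∀ x y : A, mul ((2 * ⟪e, x⟫) • e - x) (mul x y) = (‖x‖ ^ 2) • y)
    (hre : ∀ x : A, mul (mul x e) e = x) :
    ∀ x : A, mul (mul (mul x e) x) e = mul x (mul x e) := by
  intro x
  by_cases he : e = 0
  · have hx : x = 0 := by rw [← hleft x, he]; simp
    simp [hx]
  · have hee : mul e e = e := hleft e
    have hne : ‖e‖ = 1 := by
      have h := habs e e
      rw [hee] at h
      have h0 : ‖e‖ ≠ 0 := norm_ne_zero_iff.mpr he
      exact mul_left_cancel₀ h0 (by rw [mul_one, ← h])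
    have hinner_e : ⟪e, e⟫ = (1 : ℝ) := by
      rw [real_inner_self_eq_norm_sq, hne]; norm_num
    -- right multiplication by e preserves the inner product
    have hRe : ∀ a c : A, ⟪mul a e, mul c e⟫ = ⟪a, c⟫ := by
      intro a c
      have h1 : ‖mul a e + mul c e‖ = ‖a + c‖ := by
        rw [show mul a e + mul c e = mul (a + c) e by rw [map_add]; rfl,
          habs, hne, mul_one]
      have h2 : ‖mul a e‖ = ‖a‖ := by rw [habs, hne, mul_one]
      have h3 : ‖mul c e‖ = ‖c‖ := by
        rw [habs, hne, mul_one]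
      rw [real_inner_eq_norm_add_mul_self_sub_norm_mul_self_sub_norm_mul_self_div_two,
        h1, h2, h3,
        ← real_inner_eq_norm_add_mul_self_sub_norm_mul_self_sub_norm_mul_self_div_two]
    set u : A := mul x e with hu
    have hue : mul u e = x := hre x
    have hnu : ‖u‖ = ‖x‖ := by rw [hu, habs, hne, mul_one]
    have hmu : ⟪e, u⟫ = ⟪e, x⟫ := by
      have := hRe e x
      rwa [hee] at this
    set μ : ℝ := ⟪e, x⟫ with hμ
    set us : A := (2 * μ) • e - u with hus
    have h1 : ⟪e, us⟫ = μ := by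
      rw [hus, inner_sub_right, real_inner_smul_right, hinner_e, hmu]
      ring
    have h2 : (2 * ⟪e, us⟫) • e - us = u := by
      rw [h1, hus]; abel
    have h3 : ‖us‖ = ‖u‖ := by
      have hsq : ‖us‖ ^ 2 = ‖u‖ ^ 2 := by
        rw [hus, norm_sub_sq_real, norm_smul, real_inner_smul_left, hne, hmu]
        simp only [Real.norm_eq_abs]
        rw [mul_one, sq_abs]
        ring
      rw [← Real.sqrt_sq (norm_nonneg us), ← Real.sqrt_sq (norm_nonneg u), hsq]
    -- key identity: u * x = (2μ) • x - ‖x‖² • e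
    have hux : mul u x = (2 * μ) • x - (‖x‖ ^ 2) • e := by
      have key := hstar us e
      rw [h2, h3, hnu] at key
      have hmuse : mul us e = (2 * μ) • e - x := by
        rw [hus, map_sub, map_smul, LinearMap.sub_apply, LinearMap.smul_apply,
          hee, hue]
      rw [hmuse, map_sub, map_smul, hue] at key
      have : (2 * μ) • x - mul u x = ‖x‖ ^ 2 • e := key
      linear_combination (norm := module) -this
    -- x * u = (2μ) • u - ‖x‖² • e
    have hxu : mul x u = (2 * μ) • u - (‖x‖ ^ 2) • e := by
      have key := hstar x e
      rw [← hμ, ← hu, map_sub, map_smul, LinearMap.sub_apply, LinearMap.smul_apply,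
        hleft] at key
      linear_combination (norm := module) -key
    rw [hux, hxu]
    simp only [map_sub, map_smul, LinearMap.sub_apply, LinearMap.smul_apply, hee, ← hu]
end
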